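/- arXiv:1907.11319 — 3 statements merged into one kernel-verified Lean document; each statement's English description precedes it below -/
import Mathlib

section
/- Let S : [0,∞) → ℝ be continuous, strictly convex, and twice continuously differentiable on (0,∞)\{1}, with one-sided derivatives S'(1⁻) ≤ S'(1⁺) at 1. Define L(ρ,p) = ρ S'(ρ) - S(ρ) + S(1) if ρ ≠ 1 and L(ρ,p) = p if ρ = 1, where p satisfies: p = S'(1⁻) if 0 ≤ ρ < 1, p ∈ [S'(1⁻), S'(1⁺)] if ρ = 1, and p = S'(1⁺) if ρ > 1. Then L is strictly monotone in ρ: if (ρ₁,p₁) and (ρ₂,p₂) are two admissible pairs with ρ₁ < ρ₂, then L(ρ₁,p₁) < L(ρ₂,p₂). -/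
/-!
Write `L(ρ, p) = ρ q(ρ) - S ρ + S 1`, where `q(ρ)` is `p` at `ρ = 1` and `S' ρ` elsewhere, so that
`q(ρ)` is a subgradient of `S` at `ρ`. For `ρ₁ < ρ₂`, strict convexity puts the chord slope
`σ = (S ρ₂ - S ρ₁) / (ρ₂ - ρ₁)` strictly between `q(ρ₁)` and `q(ρ₂)`, hence
`L(ρ₂) - L(ρ₁) = ρ₂ q(ρ₂) - ρ₁ q(ρ₁) - σ (ρ₂ - ρ₁) > ρ₁ (q(ρ₂) - q(ρ₁)) ≥ 0`.
At `ρ₁ = 0` no bound on `q(0)` is needed, since it is multiplied by `0`.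
-/

open Set

theorem mul_sub_lt_mul_sub_of_slope_lt {f : ℝ → ℝ} {x y q₁ q₂ : ℝ} (hx : 0 ≤ x) (hxy : x < y)
    (h₁ : 0 < x → q₁ ≤ slope f x y) (h₂ : slope f x y < q₂) :
    x * q₁ - f x < y * q₂ - f y := by
  have hchord : f y - f x < q₂ * (y - x) := by
    rwa [slope_def_field, div_lt_iff₀ (sub_pos.mpr hxy)] at h₂
  have hq : x * q₁ ≤ x * q₂ := by
    rcases hx.eq_or_lt with rfl | hx
    · simp
    · exact mul_le_mul_of_nonneg_left ((h₁ hx).trans h₂.le) hx.le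
  nlinarith

noncomputable def admissibleSlope (S' : ℝ → ℝ) (p ρ : ℝ) : ℝ :=
  if ρ = 1 then p else S' ρ

theorem ite_eq_mul_admissibleSlope (S S' : ℝ → ℝ) (p ρ : ℝ) :
    (if ρ = 1 then p else ρ * S' ρ - S ρ + S 1) = ρ * admissibleSlope S' p ρ - S ρ + S 1 := by
  unfold admissibleSlope
  split_ifs with h
  · subst h; ring
  · rfl

section StrictConvex

variable {S S' : ℝ → ℝ} {a b x y p : ℝ}

theorem slope_lt_admissibleSlope (hSconv : StrictConvexOn ℝ (Ici 0) S)
    (hS' : ∀ ρ ∈ Ioi (0:ℝ) \ {1}, HasDerivAt S (S' ρ) ρ) (ha : HasDerivWithinAt S a (Iio 1) 1)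
    (hx : 0 ≤ x) (hxy : x < y) (hp : y = 1 → a ≤ p) :
    slope S x y < admissibleSlope S' p y := by
  have hy : y ∈ Ici (0:ℝ) := hx.trans hxy.le
  unfold admissibleSlope
  split_ifs with h1
  · subst h1
    exact (hSconv.slope_lt_of_hasDerivWithinAt_Iio hx hy hxy ha).trans_le (hp rfl)
  · exact hSconv.slope_lt_of_hasDerivAt hx hy hxy (hS' y ⟨hx.trans_lt hxy, h1⟩)

theorem admissibleSlope_lt_slope (hSconv : StrictConvexOn ℝ (Ici 0) S)
    (hS' : ∀ ρ ∈ Ioi (0:ℝ) \ {1}, HasDerivAt S (S' ρ) ρ) (hb : HasDerivWithinAt S b (Ioi 1) 1)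
    (hx : 0 < x) (hxy : x < y) (hp : x = 1 → p ≤ b) :
    admissibleSlope S' p x < slope S x y := by
  have hy : y ∈ Ici (0:ℝ) := (hx.trans hxy).le
  unfold admissibleSlope
  split_ifs with h1
  · subst h1
    exact (hp rfl).trans_lt (hSconv.lt_slope_of_hasDerivWithinAt_Ioi hx.le hy hxy hb)
  · exact hSconv.lt_slope_of_hasDerivAt hx.le hy hxy (hS' x ⟨hx, h1⟩)

end StrictConvex

theorem stmt_5_general (S S' : ℝ → ℝ) (a b : ℝ)
    (hSconv : StrictConvexOn ℝ (Set.Ici 0) S)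
    (hS' : ∀ ρ ∈ Set.Ioi (0:ℝ) \ {1}, HasDerivAt S (S' ρ) ρ)
    (ha : HasDerivWithinAt S a (Set.Iio 1) 1)
    (hb : HasDerivWithinAt S b (Set.Ioi 1) 1)
    (ρ₁ ρ₂ p₁ p₂ : ℝ) (hρ₁ : 0 ≤ ρ₁)
    (hadm₁ : (ρ₁ < 1 → p₁ = a) ∧ (ρ₁ = 1 → p₁ ∈ Set.Icc a b) ∧ (1 < ρ₁ → p₁ = b))
    (hadm₂ : (ρ₂ < 1 → p₂ = a) ∧ (ρ₂ = 1 → p₂ ∈ Set.Icc a b) ∧ (1 < ρ₂ → p₂ = b))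
    (h : ρ₁ < ρ₂) :
    (if ρ₁ = 1 then p₁ else ρ₁ * S' ρ₁ - S ρ₁ + S 1) <
      (if ρ₂ = 1 then p₂ else ρ₂ * S' ρ₂ - S ρ₂ + S 1) := by
  rw [ite_eq_mul_admissibleSlope, ite_eq_mul_admissibleSlope, add_lt_add_iff_right]
  exact mul_sub_lt_mul_sub_of_slope_lt hρ₁ h
    (fun hpos ↦ (admissibleSlope_lt_slope hSconv hS' hb hpos h fun h1 ↦ (hadm₁.2.1 h1).2).le)
    (slope_lt_admissibleSlope hSconv hS' ha hρ₁ h fun h2 ↦ (hadm₂.2.1 h2).1)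

/-- Strict monotonicity of the operator `L(ρ,p) = ρS'(ρ) - S(ρ) + S(1)` for `ρ ≠ 1`,
`L(1,p) = p`, over admissible pairs: if `ρ₁ < ρ₂` then `L(ρ₁,p₁) < L(ρ₂,p₂)`. -/
theorem stmt_5 (S S' : ℝ → ℝ) (a b : ℝ)
    (hScont : ContinuousOn S (Set.Ici 0))
    (hSconv : StrictConvexOn ℝ (Set.Ici 0) S)
    (hS' : ∀ ρ ∈ Set.Ioi (0:ℝ) \ {1}, HasDerivAt S (S' ρ) ρ)
    (ha : HasDerivWithinAt S a (Set.Iio 1) 1)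
    (hb : HasDerivWithinAt S b (Set.Ioi 1) 1)
    (hab : a ≤ b)
    (ρ₁ ρ₂ p₁ p₂ : ℝ) (hρ₁ : 0 ≤ ρ₁) (hρ₂ : 0 ≤ ρ₂)
    (hadm₁ : (ρ₁ < 1 → p₁ = a) ∧ (ρ₁ = 1 → p₁ ∈ Set.Icc a b) ∧ (1 < ρ₁ → p₁ = b))
    (hadm₂ : (ρ₂ < 1 → p₂ = a) ∧ (ρ₂ = 1 → p₂ ∈ Set.Icc a b) ∧ (1 < ρ₂ → p₂ = b))
    (h : ρ₁ < ρ₂) :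
    (if ρ₁ = 1 then p₁ else ρ₁ * S' ρ₁ - S ρ₁ + S 1) <
      (if ρ₂ = 1 then p₂ else ρ₂ * S' ρ₂ - S ρ₂ + S 1) :=
  stmt_5_general S S' a b hSconv hS' ha hb ρ₁ ρ₂ p₁ p₂ hρ₁ hadm₁ hadm₂ h
end

section
/- Let L and admissible pairs be as above. If (ρ₁,p₁) and (ρ₂,p₂) are admissible pairs with L(ρ₁,p₁) = L(ρ₂,p₂), then ρ₁ = ρ₂ and p₁ = p₂. -/
/-!
Away from `1` put `g(ρ) = S'(ρ)`, and at `1` let `g(1) = p`; then `L(ρ,p) = ρ g - S(ρ) + S(1)` in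
every case. For admissible pairs with `ρ₁ < ρ₂`, strict convexity places the chord slope
`s = slope S ρ₁ ρ₂` strictly between `g₁` and `g₂` (at `1` through `p ∈ [S'(1⁻), S'(1⁺)]`), and
`L(ρ₂,p₂) - L(ρ₁,p₁) = ρ₂ (g₂ - s) + ρ₁ (s - g₁) > 0`. So `L` is strictly increasing in `ρ`, and for
equal `ρ ≠ 1` admissibility pins down `p`.
-/

open Set

lemma mul_sub_lt_mul_sub_of_slope {f : ℝ → ℝ} {x y dx dy : ℝ} (hx : 0 ≤ x) (hxy : x < y)
    (hdx : x * dx ≤ x * slope f x y) (hdy : slope f x y < dy) :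
    x * dx - f x < y * dy - f y := by
  have hchord : f y - f x = (y - x) * slope f x y := by
    rw [slope_def_field]; field_simp [sub_ne_zero.mpr hxy.ne']
  nlinarith

/-- Admissibility of a pair `(ρ, p)`, with `a = S'(1⁻)` and `b = S'(1⁺)`. -/
def Admissible (a b ρ p : ℝ) : Prop :=
  (ρ < 1 → p = a) ∧ (ρ = 1 → p ∈ Icc a b) ∧ (1 < ρ → p = b)

lemma Admissible.eq_of_ne_one {a b ρ p q : ℝ} (hp : Admissible a b ρ p)
    (hq : Admissible a b ρ q) (hρ : ρ ≠ 1) : p = q := by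
  rcases hρ.lt_or_gt with h | h
  · rw [hp.1 h, hq.1 h]
  · rw [hp.2.2 h, hq.2.2 h]

noncomputable def legendreL (S S' : ℝ → ℝ) (ρ p : ℝ) : ℝ :=
  if ρ = 1 then p else ρ * S' ρ - S ρ + S 1

noncomputable def subgradient (S' : ℝ → ℝ) (ρ p : ℝ) : ℝ :=
  if ρ = 1 then p else S' ρ

lemma legendreL_eq_mul_subgradient (S S' : ℝ → ℝ) (ρ p : ℝ) :
    legendreL S S' ρ p = ρ * subgradient S' ρ p - S ρ + S 1 := by
  unfold legendreL subgradient
  split_ifs with h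
  · subst h; ring
  · rfl

section StrictConvex

variable {S S' : ℝ → ℝ} {a b : ℝ}
  (hSconv : StrictConvexOn ℝ (Ici 0) S)
  (hS' : ∀ ρ ∈ Ioi (0 : ℝ) \ {1}, HasDerivAt S (S' ρ) ρ)
include hSconv hS'

lemma slope_lt_subgradient (ha : HasDerivWithinAt S a (Iio 1) 1) {ρ₁ ρ₂ p : ℝ}
    (hp : Admissible a b ρ₂ p) (hρ₁ : 0 ≤ ρ₁) (hρ : ρ₁ < ρ₂) :
    slope S ρ₁ ρ₂ < subgradient S' ρ₂ p := by
  unfold subgradient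
  split_ifs with h
  · subst h
    exact (hSconv.slope_lt_of_hasDerivWithinAt_Iio hρ₁ (mem_Ici.2 zero_le_one) hρ ha).trans_le (hp.2.1 rfl).1
  · have hρ₂ : 0 < ρ₂ := hρ₁.trans_lt hρ
    exact hSconv.slope_lt_of_hasDerivAt hρ₁ hρ₂.le hρ (hS' ρ₂ ⟨hρ₂, h⟩)

lemma subgradient_lt_slope (hb : HasDerivWithinAt S b (Ioi 1) 1) {ρ₁ ρ₂ p : ℝ}
    (hp : Admissible a b ρ₁ p) (hρ₁ : 0 < ρ₁) (hρ : ρ₁ < ρ₂) :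
    subgradient S' ρ₁ p < slope S ρ₁ ρ₂ := by
  have hρ₂ : 0 ≤ ρ₂ := hρ₁.le.trans hρ.le
  unfold subgradient
  split_ifs with h
  · subst h
    exact (hp.2.1 rfl).2.trans_lt (hSconv.lt_slope_of_hasDerivWithinAt_Ioi (mem_Ici.2 zero_le_one) hρ₂ hρ hb)
  · exact hSconv.lt_slope_of_hasDerivAt hρ₁.le hρ₂ hρ (hS' ρ₁ ⟨hρ₁, h⟩)

lemma legendreL_lt_of_lt (ha : HasDerivWithinAt S a (Iio 1) 1)
    (hb : HasDerivWithinAt S b (Ioi 1) 1) {ρ₁ ρ₂ p₁ p₂ : ℝ} (hp₁ : Admissible a b ρ₁ p₁)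
    (hp₂ : Admissible a b ρ₂ p₂) (hρ₁ : 0 ≤ ρ₁) (hρ : ρ₁ < ρ₂) :
    legendreL S S' ρ₁ p₁ < legendreL S S' ρ₂ p₂ := by
  rw [legendreL_eq_mul_subgradient, legendreL_eq_mul_subgradient, add_lt_add_iff_right]
  refine mul_sub_lt_mul_sub_of_slope hρ₁ hρ ?_ (slope_lt_subgradient hSconv hS' ha hp₂ hρ₁ hρ)
  rcases hρ₁.eq_or_lt with h | h
  · simp [← h]
  · exact mul_le_mul_of_nonneg_left (subgradient_lt_slope hSconv hS' hb hp₁ h hρ).le hρ₁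

end StrictConvex

theorem stmt_8_general (S S' : ℝ → ℝ) (a b : ℝ)
    (hSconv : StrictConvexOn ℝ (Set.Ici 0) S)
    (hS' : ∀ ρ ∈ Set.Ioi (0:ℝ) \ {1}, HasDerivAt S (S' ρ) ρ)
    (ha : HasDerivWithinAt S a (Set.Iio 1) 1)
    (hb : HasDerivWithinAt S b (Set.Ioi 1) 1)
    (ρ₁ ρ₂ p₁ p₂ : ℝ) (hρ₁ : 0 ≤ ρ₁) (hρ₂ : 0 ≤ ρ₂)
    (hadm₁ : (ρ₁ < 1 → p₁ = a) ∧ (ρ₁ = 1 → p₁ ∈ Set.Icc a b) ∧ (1 < ρ₁ → p₁ = b))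
    (hadm₂ : (ρ₂ < 1 → p₂ = a) ∧ (ρ₂ = 1 → p₂ ∈ Set.Icc a b) ∧ (1 < ρ₂ → p₂ = b))
    (hL : (if ρ₁ = 1 then p₁ else ρ₁ * S' ρ₁ - S ρ₁ + S 1) =
      (if ρ₂ = 1 then p₂ else ρ₂ * S' ρ₂ - S ρ₂ + S 1)) :
    ρ₁ = ρ₂ ∧ p₁ = p₂ := by
  change legendreL S S' ρ₁ p₁ = legendreL S S' ρ₂ p₂ at hL
  rcases lt_trichotomy ρ₁ ρ₂ with h | rfl | h
  · exact absurd hL (legendreL_lt_of_lt hSconv hS' ha hb hadm₁ hadm₂ hρ₁ h).ne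
  · refine ⟨rfl, ?_⟩
    by_cases h1 : ρ₁ = 1
    · simpa [legendreL, h1] using hL
    · exact Admissible.eq_of_ne_one hadm₁ hadm₂ h1
  · exact absurd hL (legendreL_lt_of_lt hSconv hS' ha hb hadm₂ hadm₁ hρ₂ h).ne'

/-- Injectivity of `L` on admissible pairs: if `L(ρ₁,p₁) = L(ρ₂,p₂)` then
`ρ₁ = ρ₂` and `p₁ = p₂`. -/
theorem stmt_8 (S S' : ℝ → ℝ) (a b : ℝ)
    (hScont : ContinuousOn S (Set.Ici 0))
    (hSconv : StrictConvexOn ℝ (Set.Ici 0) S)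
    (hS' : ∀ ρ ∈ Set.Ioi (0:ℝ) \ {1}, HasDerivAt S (S' ρ) ρ)
    (ha : HasDerivWithinAt S a (Set.Iio 1) 1)
    (hb : HasDerivWithinAt S b (Set.Ioi 1) 1)
    (hab : a ≤ b)
    (ρ₁ ρ₂ p₁ p₂ : ℝ) (hρ₁ : 0 ≤ ρ₁) (hρ₂ : 0 ≤ ρ₂)
    (hadm₁ : (ρ₁ < 1 → p₁ = a) ∧ (ρ₁ = 1 → p₁ ∈ Set.Icc a b) ∧ (1 < ρ₁ → p₁ = b))
    (hadm₂ : (ρ₂ < 1 → p₂ = a) ∧ (ρ₂ = 1 → p₂ ∈ Set.Icc a b) ∧ (1 < ρ₂ → p₂ = b))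
    (hL : (if ρ₁ = 1 then p₁ else ρ₁ * S' ρ₁ - S ρ₁ + S 1) =
      (if ρ₂ = 1 then p₂ else ρ₂ * S' ρ₂ - S ρ₂ + S 1)) :
    ρ₁ = ρ₂ ∧ p₁ = p₂ :=
  stmt_8_general S S' a b hSconv hS' ha hb ρ₁ ρ₂ p₁ p₂ hρ₁ hρ₂ hadm₁ hadm₂ hL
end

section
/- Let l > ln(3/2) + 1/2 and let A ∈ (0, l - 1/2) satisfy exp(A) - (1/2)exp(2A+1-2l) - 1 = 0. Define ρ : [0,l] → ℝ by ρ(x) = exp(A - x) for x ∈ [0,A), ρ(x) = 1 for x ∈ [A, A+1/2], and ρ(x) = exp(2A + 1 - 2x) for x ∈ (A+1/2, l]. Then ∫₀ˡ ρ(x) dx = 1, and the three sets {ρ < 1}, {ρ = 1}, {ρ > 1} each have positive Lebesgue measure. -/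
/-!
The three pieces of the profile agree at the junctions, so it is continuous, and their
integrals are `exp A - 1`, `1/2` and `(1 - exp (2A + 1 - 2l)) / 2`, whose sum is `1` exactly by the
equation defining `A`. The three level sets contain the open intervals `(0, A)`, `(A, A + 1/2)` and
`(A + 1/2, l)`, which are nonempty since `0 < A < l - 1/2`.
-/

open MeasureTheory Real Set

noncomputable def plateauProfile (A x : ℝ) : ℝ :=
  if x < A then exp (A - x) else if x ≤ A + 1/2 then 1 else exp (2*A + 1 - 2*x)

section

variable {A x : ℝ}

lemma plateauProfile_of_le (hx : x ≤ A) : plateauProfile A x = exp (A - x) := by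
  rcases hx.lt_or_eq with hx | rfl
  · simp [plateauProfile, hx]
  · simp [plateauProfile]

lemma plateauProfile_of_mem_Icc (hx : x ∈ Icc A (A + 1/2)) : plateauProfile A x = 1 := by
  rw [plateauProfile, if_neg (not_lt.2 hx.1), if_pos hx.2]

lemma plateauProfile_of_ge (hx : A + 1/2 ≤ x) : plateauProfile A x = exp (2*A + 1 - 2*x) := by
  rcases hx.lt_or_eq with hx' | rfl
  · rw [plateauProfile, if_neg (by linarith), if_neg (not_le.2 hx')]
  · rw [plateauProfile_of_mem_Icc ⟨by linarith, le_rfl⟩, ← exp_zero]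
    ring_nf

lemma one_lt_plateauProfile (hx : x < A) : 1 < plateauProfile A x := by
  rw [plateauProfile_of_le hx.le]
  exact one_lt_exp_iff.2 (by linarith)

lemma plateauProfile_lt_one (hx : A + 1/2 < x) : plateauProfile A x < 1 := by
  rw [plateauProfile_of_ge hx.le]
  exact exp_lt_one_iff.2 (by linarith)

lemma continuous_plateauProfile (A : ℝ) : Continuous (plateauProfile A) := by
  have hρ : plateauProfile A = fun x =>
      if A ≤ x then (if x ≤ A + 1/2 then 1 else exp (2*A + 1 - 2*x)) else exp (A - x) := by
    ext x
    by_cases hx : A ≤ x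
    · rw [plateauProfile, if_neg (not_lt.2 hx), if_pos hx]
    · rw [plateauProfile, if_pos (not_le.1 hx), if_neg hx]
  have hplateau_right : Continuous fun x =>
      if x ≤ A + 1/2 then (1 : ℝ) else exp (2*A + 1 - 2*x) := by
    refine continuous_const.if_le (by fun_prop) continuous_id continuous_const fun x hx => ?_
    rw [hx, ← exp_zero]
    ring_nf
  rw [hρ]
  refine hplateau_right.if_le (by fun_prop) continuous_const continuous_id fun x hx => ?_
  rw [← hx, if_pos (by linarith), sub_self, exp_zero]

end

lemma integral_exp_sub_mul {a b k : ℝ} (hk : k ≠ 0) (c : ℝ) :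
    ∫ x in a..b, exp (c - k * x) = (exp (c - k * a) - exp (c - k * b)) / k := by
  rw [intervalIntegral.integral_comp_sub_mul (fun y => exp y) hk, integral_exp, smul_eq_mul,
    inv_mul_eq_div]

lemma integral_plateauProfile {A l : ℝ} (hA : 0 ≤ A) (hl : A + 1/2 ≤ l) :
    ∫ x in (0:ℝ)..l, plateauProfile A x = exp A - 1/2 * exp (2*A + 1 - 2*l) := by
  have hint : ∀ a b : ℝ, IntervalIntegrable (plateauProfile A) volume a b :=
    fun a b => (continuous_plateauProfile A).intervalIntegrable a b
  have hleft : ∫ x in (0:ℝ)..A, plateauProfile A x = exp A - 1 := by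
    rw [intervalIntegral.integral_congr (g := fun x => exp (A - 1 * x)) fun x hx => by
      simpa using plateauProfile_of_le (uIcc_of_le hA ▸ hx).2]
    rw [integral_exp_sub_mul one_ne_zero]
    simp
  have hmid : ∫ x in A..A + 1/2, plateauProfile A x = 1/2 := by
    rw [intervalIntegral.integral_congr (g := fun _ => (1:ℝ)) fun x hx =>
      plateauProfile_of_mem_Icc (uIcc_of_le (by linarith : A ≤ A + 1/2) ▸ hx)]
    simp
  have hright : ∫ x in A + 1/2..l, plateauProfile A x = (1 - exp (2*A + 1 - 2*l)) / 2 := by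
    rw [intervalIntegral.integral_congr (g := fun x => exp ((2*A + 1) - 2 * x)) fun x hx =>
      plateauProfile_of_ge (uIcc_of_le hl ▸ hx).1]
    rw [integral_exp_sub_mul two_ne_zero]
    ring_nf
    simp
  rw [← intervalIntegral.integral_add_adjacent_intervals (hint 0 A) (hint A l),
    ← intervalIntegral.integral_add_adjacent_intervals (hint A (A + 1/2)) (hint _ l),
    hleft, hmid, hright]
  ring

lemma volume_pos_of_Ioo_subset {s : Set ℝ} {a b : ℝ} (hab : a < b) (h : Ioo a b ⊆ s) :
    0 < volume s :=
  (isOpen_Ioo.measure_pos volume (nonempty_Ioo.2 hab)).trans_le (measure_mono h)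

theorem stmt_13_general (l A : ℝ)
    (hA : A ∈ Set.Ioo (0:ℝ) (l - 1/2))
    (hroot : Real.exp A - (1/2) * Real.exp (2*A + 1 - 2*l) - 1 = 0) :
    let ρ : ℝ → ℝ := fun x => if x < A then Real.exp (A - x)
      else if x ≤ A + 1/2 then 1 else Real.exp (2*A + 1 - 2*x)
    (∫ x in (0:ℝ)..l, ρ x) = 1 ∧
    0 < volume {x ∈ Set.Icc (0:ℝ) l | ρ x < 1} ∧
    0 < volume {x ∈ Set.Icc (0:ℝ) l | ρ x = 1} ∧
    0 < volume {x ∈ Set.Icc (0:ℝ) l | 1 < ρ x} := by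
  intro ρ
  obtain ⟨hA0, hAl⟩ := hA
  refine ⟨?_, ?_, ?_, ?_⟩
  · exact (integral_plateauProfile hA0.le (by linarith)).trans (by linarith)
  · exact volume_pos_of_Ioo_subset (by linarith) fun x hx =>
      ⟨⟨by linarith [hx.1], hx.2.le⟩, plateauProfile_lt_one hx.1⟩
  · exact volume_pos_of_Ioo_subset (by linarith : A < A + 1/2) fun x hx =>
      ⟨⟨by linarith [hx.1], by linarith [hx.2]⟩,
        plateauProfile_of_mem_Icc (Ioo_subset_Icc_self hx)⟩
  · exact volume_pos_of_Ioo_subset hA0 fun x hx =>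
      ⟨⟨hx.1.le, by linarith [hx.2]⟩, one_lt_plateauProfile hx.2⟩

/-- The explicit stationary profile `ρ` with `ρ(x) = exp(A-x)` on `[0,A)`, `ρ = 1` on
`[A, A+1/2]`, `ρ(x) = exp(2A+1-2x)` on `(A+1/2, l]` has unit mass, and the three sets
`{ρ < 1}`, `{ρ = 1}`, `{ρ > 1}` all have positive Lebesgue measure. -/
theorem stmt_13 (l A : ℝ) (hl : Real.log (3/2) + 1/2 < l)
    (hA : A ∈ Set.Ioo (0:ℝ) (l - 1/2))
    (hroot : Real.exp A - (1/2) * Real.exp (2*A + 1 - 2*l) - 1 = 0) :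
    let ρ : ℝ → ℝ := fun x => if x < A then Real.exp (A - x)
      else if x ≤ A + 1/2 then 1 else Real.exp (2*A + 1 - 2*x)
    (∫ x in (0:ℝ)..l, ρ x) = 1 ∧
    0 < volume {x ∈ Set.Icc (0:ℝ) l | ρ x < 1} ∧
    0 < volume {x ∈ Set.Icc (0:ℝ) l | ρ x = 1} ∧
    0 < volume {x ∈ Set.Icc (0:ℝ) l | 1 < ρ x} :=
  stmt_13_general l A hA hroot
end
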